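/- arXiv:2103.12483 — 5 statements merged into one kernel-verified Lean document; each statement's English description precedes it below -/
import Mathlib

section
/- Let P = [[1,0],[1,1]] over 𝔽₂ and P_n = P^{⊗n} its n-fold Kronecker power. Then the Hamming weight of row i (0-indexed) of P_n equals 2^{w(i)}, where w(i) is the number of ones in the binary expansion of i. -/
open Matrix

/-- The 2×2 polar kernel `P = [[1,0],[1,1]]` over GF(2). -/
def Pmat : Matrix (Fin 2) (Fin 2) (ZMod 2) := !![1, 0; 1, 1]

/-- The polar transform `P_n = P^{⊗n}`, the n-fold Kronecker power of `Pmat`. -/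
def polarP : (n : ℕ) → Matrix (Fin (2 ^ n)) (Fin (2 ^ n)) (ZMod 2)
  | 0 => 1
  | n + 1 =>
    Matrix.reindex (finProdFinEquiv.trans (finCongr (by ring)))
      (finProdFinEquiv.trans (finCongr (by ring)))
      (Matrix.kroneckerMap (· * ·) Pmat (polarP n))

/-!
A row of a Kronecker product `A ⊗ B` is the tensor product of a row of `A` and a row of `B`, and
over a ring without zero divisors its support is the product of their supports; so Hamming weights
multiply. Writing `i = j + 2ⁿ a` with top bit `a`, row `i` of `P_{n+1}` is row `a` of `P` (weight
`2^a`) tensored with row `j` of `P_n`, and the binary digit sum of `i` is that of `j` plus `a`.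
-/

theorem hammingNorm_comp_equiv {ι κ α : Type*} [Fintype ι] [Fintype κ] [Zero α] [DecidableEq α]
    (v : κ → α) (e : ι ≃ κ) : hammingNorm (v ∘ e) = hammingNorm v :=
  Finset.card_equiv e (by simp)

theorem Matrix.hammingNorm_one_row {ι α : Type*} [Fintype ι] [DecidableEq ι] [Zero α] [One α]
    [NeZero (1 : α)] [DecidableEq α] (i : ι) : hammingNorm ((1 : Matrix ι ι α) i) = 1 := by
  have : (1 : Matrix ι ι α) i = Pi.single i 1 := funext fun j => one_eq_pi_single
  rw [this, hammingNorm, Finset.card_eq_one]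
  exact ⟨i, by ext j; by_cases h : j = i <;> simp [h]⟩

theorem Matrix.hammingNorm_reindex_row {l m l' m' α : Type*} [Fintype m] [Fintype m'] [Zero α]
    [DecidableEq α] (e : l ≃ l') (f : m ≃ m') (M : Matrix l m α) (i : l') :
    hammingNorm (reindex e f M i) = hammingNorm (M (e.symm i)) :=
  hammingNorm_comp_equiv (M (e.symm i)) f.symm

theorem Matrix.hammingNorm_kroneckerMap_mul_row {l m n p α : Type*} [Fintype m] [Fintype p]
    [MulZeroClass α] [NoZeroDivisors α] [DecidableEq α] (A : Matrix l m α) (B : Matrix n p α)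
    (i : l) (k : n) :
    hammingNorm (kroneckerMap (· * ·) A B (i, k)) = hammingNorm (A i) * hammingNorm (B k) := by
  rw [hammingNorm, hammingNorm, hammingNorm, ← Finset.card_product]
  congr 1
  ext ⟨j, q⟩
  simp

theorem Nat.digits_sum_of_lt {b a : ℕ} (ha : a < b) : (Nat.digits b a).sum = a := by
  rcases Nat.eq_zero_or_pos a with rfl | ha0
  · simp
  · simp [Nat.digits_of_lt b a ha0.ne' ha]

theorem Nat.digits_sum_add_pow_mul {b k m n : ℕ} (hb : 1 < b) (hm : m < b ^ k) :
    (Nat.digits b (m + b ^ k * n)).sum = (Nat.digits b m).sum + (Nat.digits b n).sum := by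
  rcases Nat.eq_zero_or_pos n with rfl | hn
  · simp
  have hlen : (Nat.digits b m).length ≤ k := (Nat.digits_length_le_iff hb m).mpr hm
  have h :=
    Nat.digits_append_zeroes_append_digits (n := m) (k := k - (Nat.digits b m).length) hb hn
  rw [Nat.add_sub_cancel' hlen] at h
  simp [← h]

theorem hammingNorm_Pmat_row (a : Fin 2) : hammingNorm (Pmat a) = 2 ^ a.val := by
  fin_cases a <;> decide

def polarIndexEquiv (n : ℕ) : Fin 2 × Fin (2 ^ n) ≃ Fin (2 ^ (n + 1)) :=
  finProdFinEquiv.trans (finCongr (by ring))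

theorem polarIndexEquiv_apply_val (n : ℕ) (a : Fin 2) (j : Fin (2 ^ n)) :
    (polarIndexEquiv n (a, j)).val = j.val + 2 ^ n * a.val := by
  simp [polarIndexEquiv, finProdFinEquiv]

theorem hammingNorm_polarP_succ_row (n : ℕ) (a : Fin 2) (j : Fin (2 ^ n)) :
    hammingNorm (polarP (n + 1) (polarIndexEquiv n (a, j))) =
      2 ^ a.val * hammingNorm (polarP n j) := by
  rw [polarP, ← polarIndexEquiv, hammingNorm_reindex_row, Equiv.symm_apply_apply,
    hammingNorm_kroneckerMap_mul_row, hammingNorm_Pmat_row]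

/-- Row `i` of `P_n` has Hamming weight `2^{w(i)}`, where `w(i)` is the number of
ones in the binary expansion of `i`. -/
theorem polarP_row_weight (n : ℕ) (i : Fin (2 ^ n)) :
    hammingNorm (polarP n i) = 2 ^ ((Nat.digits 2 i.val).sum) := by
  induction n with
  | zero =>
    have hi : i.val = 0 := by simp
    rw [hi, polarP, hammingNorm_one_row]
    rfl
  | succ n ih =>
    obtain ⟨⟨a, j⟩, rfl⟩ := (polarIndexEquiv n).surjective i
    rw [hammingNorm_polarP_succ_row, ih, polarIndexEquiv_apply_val,
      Nat.digits_sum_add_pow_mul one_lt_two j.isLt, Nat.digits_sum_of_lt a.isLt, pow_add, mul_comm]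
end

section
/- Let g₀,…,g_N−1 denote the rows of P_n = P^{⊗n} over 𝔽₂, indexed from 0. For any index i and any finite subset I of indices strictly greater than i, the Hamming weight of g_i ⊕ ⨁_{k∈I} g_k is at least w(g_i). -/
open Matrix

/-!
Index the rows of `P_{n+1} = P ⊗ P_n` by pairs `(a, b)`, ordered lexicographically. The row
`(0, b)` is `(g_b, 0)` and the row `(1, b)` is `(g_b, g_b)`, where `g_b` is a row of `P_n`.
Rows after `(1, b)` are all of the form `(1, b')` with `b < b'`, so adding them to `(1, b)` gives
`(g_b + s, g_b + s)` with `g_b + s` in the coset of `g_b` modulo later rows of `P_n`: induction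
applies to both halves. Adding later rows to `(0, b)` gives `(g_b + s + t, t)`, with `s` a sum of
rows of `P_n` after `b`, and `w(g_b + s + t) + w(t) ≥ w(g_b + s) ≥ w(g_b)` by the triangle
inequality and induction.
-/

section Hamming

variable {ι κ R : Type*} [Fintype κ] [DecidableEq R]

theorem hammingNorm_comp_equiv_s8 [Zero R] [Fintype ι] (x : ι → R) (f : κ ≃ ι) :
    hammingNorm (x ∘ f) = hammingNorm x :=
  Finset.card_equiv f (by simp)

theorem hammingNorm_prod_eq_sum [Zero R] [Fintype ι] (v : ι × κ → R) :
    hammingNorm v = ∑ a, hammingNorm (fun b => v (a, b)) := by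
  simp only [hammingNorm, Finset.card_filter]
  exact Fintype.sum_prod_type _

theorem hammingNorm_le_hammingNorm_add_add_hammingNorm [AddCommGroup R] (x y : κ → R) :
    hammingNorm x ≤ hammingNorm (x + y) + hammingNorm y := by
  calc hammingNorm x = hammingDist (x + y) y := by
        rw [hammingDist_comm, hammingDist_eq_hammingNorm, add_comm x y, neg_add_cancel_left]
    _ ≤ hammingDist (x + y) 0 + hammingDist 0 y := hammingDist_triangle _ _ _
    _ = hammingNorm (x + y) + hammingNorm y := by
        rw [hammingDist_zero_right, hammingDist_zero_left]

end Hamming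

theorem Finset.sum_eq_sum_sum_preimage_toLex {α β M : Type*} [Fintype α] [DecidableEq α]
    [AddCommMonoid M] (s : Finset (α ×ₗ β)) (f : α ×ₗ β → M) :
    ∑ k ∈ s, f k = ∑ a, ∑ b ∈ s.preimage (fun b => toLex (a, b))
      (toLex.injective.comp (Prod.mk_right_injective a)).injOn, f (toLex (a, b)) := by
  classical
  rw [← Finset.sum_fiberwise s (fun k => (ofLex k).1)]
  refine Finset.sum_congr rfl fun a _ => ?_
  rw [Finset.sum_preimage']
  refine Finset.sum_congr (Finset.filter_congr fun k _ => ?_) fun _ _ => rfl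
  constructor
  · rintro rfl
    exact ⟨(ofLex k).2, rfl⟩
  · rintro ⟨b, rfl⟩
    rfl

theorem strictMono_finProdFinEquiv_ofLex {m n : ℕ} :
    StrictMono (fun p : Fin m ×ₗ Fin n => finProdFinEquiv (ofLex p)) := by
  intro p q h
  simp only [Fin.lt_def, finProdFinEquiv_apply_val]
  rcases Prod.Lex.lt_iff.1 h with hfst | ⟨hfst, hsnd⟩
  · have hp : ((ofLex p).2 : ℕ) < n := (ofLex p).2.isLt
    have hq : ((ofLex p).1 : ℕ) + 1 ≤ (ofLex q).1 := hfst
    nlinarith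
  · rw [hfst]
    exact Nat.add_lt_add_right hsnd _

theorem strictMono_toLex_finProdFinEquiv_symm {m n : ℕ} :
    StrictMono (fun i : Fin (m * n) => toLex (finProdFinEquiv.symm i)) := fun i k h =>
  strictMono_finProdFinEquiv_ofLex.lt_iff_lt.1 (by simpa only [ofLex_toLex, Equiv.apply_symm_apply])

section MinWeight

variable {ι ι' κ κ' R : Type*} [Fintype κ] [DecidableEq R] [AddCommMonoid R]

/-- Over `𝔽₂` the sums `∑ k ∈ I, G k` with `i < k` for `k ∈ I` are exactly the elements of the
span of the later rows, so this says that `G i` has minimum weight in its coset modulo them. -/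
def MinWeightModLaterRows [LT ι] (G : ι → κ → R) : Prop :=
  ∀ i (I : Finset ι), (∀ k ∈ I, i < k) → hammingNorm (G i) ≤ hammingNorm (G i + ∑ k ∈ I, G k)

theorem minWeightModLaterRows_of_subsingleton [Preorder ι] [Subsingleton ι] (G : ι → κ → R) :
    MinWeightModLaterRows G := by
  intro i I hI
  have hI : I = ∅ := Finset.eq_empty_of_forall_notMem fun k hk =>
    (hI k hk).ne (Subsingleton.elim i k)
  simp [hI]

theorem MinWeightModLaterRows.reindex [LinearOrder ι'] [Preorder ι] [Fintype κ']
    {G : ι → κ → R} (hG : MinWeightModLaterRows G) {e : ι' → ι} (he : StrictMono e)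
    (f : κ' ≃ κ) : MinWeightModLaterRows (fun i => G (e i) ∘ f) := by
  intro i I hI
  have key := hG (e i) (I.map ⟨e, he.injective⟩) (by simpa using fun k hk => he (hI k hk))
  rw [Finset.sum_map] at key
  convert key using 1
  · exact hammingNorm_comp_equiv_s8 _ f
  · convert hammingNorm_comp_equiv_s8 _ f
    ext c
    simp [Finset.sum_apply]

theorem MinWeightModLaterRows.kroneckerMap_Pmat [LT ι] {G : ι → κ → ZMod 2}
    (hG : MinWeightModLaterRows G) :
    MinWeightModLaterRows (fun p : Fin 2 ×ₗ ι => kroneckerMap (· * ·) Pmat G (ofLex p)) := by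
  refine toLex.surjective.forall.2 ?_
  rintro ⟨a, b⟩ I hI
  set K := kroneckerMap (· * ·) Pmat G
  set J : Fin 2 → Finset ι := fun a' => I.preimage (fun b' => toLex (a', b'))
      (toLex.injective.comp (Prod.mk_right_injective a')).injOn
  set T : Fin 2 → κ → ZMod 2 := fun a' => ∑ b' ∈ J a', G b'
  have hrow : ∀ c, (fun d => K (a, b) (c, d)) = Pmat a c • G b := fun c => rfl
  have hhalf : ∀ c, (fun d => (K (a, b) + ∑ k ∈ I, K (ofLex k)) (c, d))
      = Pmat a c • G b + ∑ a', Pmat a' c • T a' := by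
    intro c
    ext d
    simp only [K, T, J, Pi.add_apply, Finset.sum_apply, Pi.smul_apply, smul_eq_mul]
    rw [Finset.sum_eq_sum_sum_preimage_toLex I]
    simp only [ofLex_toLex, Finset.mul_sum]
    rfl
  have hlater : ∀ b' ∈ J a, b < b' := fun b' hb' => by
    simpa [Prod.Lex.toLex_lt_toLex] using hI _ (Finset.mem_preimage.1 hb')
  have hmin := hG b (J a) hlater
  change hammingNorm (K (a, b)) ≤ hammingNorm (K (a, b) + ∑ k ∈ I, K (ofLex k))
  rw [hammingNorm_prod_eq_sum, hammingNorm_prod_eq_sum, Fin.sum_univ_two, Fin.sum_univ_two,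
    hrow, hrow, hhalf, hhalf]
  fin_cases a
  · simp only [Pmat, Fin.zero_eta, Fin.isValue, of_apply, cons_val', cons_val_zero,
      cons_val_fin_one, cons_val_one, one_smul, zero_smul, hammingNorm_zero, add_zero,
      Fin.sum_univ_two, zero_add]
    calc hammingNorm (G b) ≤ hammingNorm (G b + T 0) := hmin
      _ ≤ hammingNorm (G b + T 0 + T 1) + hammingNorm (T 1) :=
        hammingNorm_le_hammingNorm_add_add_hammingNorm _ _
      _ = hammingNorm (G b + (T 0 + T 1)) + hammingNorm (T 1) := by rw [add_assoc]
  · have hT0 : T 0 = 0 := Finset.sum_eq_zero fun b' hb' =>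
      absurd (hI _ (Finset.mem_preimage.1 hb')) (by simp [Prod.Lex.toLex_lt_toLex])
    simp only [Pmat, Fin.mk_one, Fin.isValue, of_apply, cons_val', cons_val_zero,
      cons_val_fin_one, cons_val_one, one_smul, Fin.sum_univ_two, hT0, smul_zero, zero_add]
    exact add_le_add hmin hmin

end MinWeight

theorem minWeightModLaterRows_polarP (n : ℕ) : MinWeightModLaterRows (polarP n) := by
  induction n with
  | zero =>
    have : Subsingleton (Fin (2 ^ 0)) := Fin.subsingleton_iff_le_one.2 le_rfl
    exact minWeightModLaterRows_of_subsingleton _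
  | succ n ih =>
    exact ih.kroneckerMap_Pmat.reindex
      (strictMono_toLex_finProdFinEquiv_symm.comp (Fin.cast_strictMono (by ring))) _

/-- (Lemma 1) For any row index `i` and any set `I` of indices strictly greater
than `i`, the weight of `g_i ⊕ ⨁_{k∈I} g_k` is at least `w(g_i)`. -/
theorem coset_weight_lower_bound (n : ℕ) (i : Fin (2 ^ n)) (I : Finset (Fin (2 ^ n)))
    (hI : ∀ k ∈ I, i < k) :
    hammingNorm (polarP n i) ≤ hammingNorm (polarP n i + ∑ k ∈ I, polarP n k) :=
  minWeightModLaterRows_polarP n i I hI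
end

section
/- Let g₀,…,g_{N−1} be the rows of P_n over 𝔽₂ and let w_min = min_{i∈𝒜} w(g_i) for an index set 𝒜 ⊆ {0,…,N−1}. If i ∈ 𝒜 satisfies w(g_i) > w_min, then for every subset K of indices k > i, the codeword g_i ⊕ ⨁_{k∈K} g_k has Hamming weight strictly greater than w_min. -/
/-!
Split a vector of length `2^(n+1)` into its halves `(v₀, v₁)`; then
`u P_{n+1} = ((u₀ + u₁) P_n, u₁ P_n)`. By induction on `n`, every message `u` whose first
nonzero coordinate is `i` encodes to a word of weight at least `w(g_i)`: if `i = (0, b)` lies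
in the first half, `w((u₀ + u₁) P_n) + w(u₁ P_n) ≥ w(u₀ P_n) ≥ w(g_b) = w(g_i)`; if
`i = (1, b)`, then `u₀ = 0`, both halves equal `u₁ P_n`, and `w(g_i) = 2 w(g_b)`.
Taking `u` to be the indicator of `{i} ∪ K` gives `w(g_i ⊕ ⨁_{k ∈ K} g_k) ≥ w(g_i) > w_min`.
-/

open Matrix

theorem hammingNorm_eq_add_of_equiv {ι κ β : Type*} [Fintype ι] [Fintype κ] [Zero β]
    [DecidableEq β] (e : Fin 2 × ι ≃ κ) (v : κ → β) :
    hammingNorm v = hammingNorm (fun d => v (e (0, d))) + hammingNorm (fun d => v (e (1, d))) := by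
  simp only [hammingNorm, Finset.card_filter]
  rw [← e.sum_comp, Fintype.sum_prod_type, Fin.sum_univ_two]

theorem hammingNorm_sub_le {ι : Type*} [Fintype ι] {β : ι → Type*} [∀ i, AddCommGroup (β i)]
    [∀ i, DecidableEq (β i)] (x y : ∀ i, β i) :
    hammingNorm (x - y) ≤ hammingNorm x + hammingNorm y := by
  calc hammingNorm (x - y) = hammingDist y x := by rw [hammingDist_eq_hammingNorm, neg_add_eq_sub]
    _ ≤ hammingDist y 0 + hammingDist 0 x := hammingDist_triangle y 0 x
    _ = hammingNorm x + hammingNorm y := by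
      rw [hammingDist_zero_right, hammingDist_zero_left, add_comm]

namespace polarP

def blockEquiv (n : ℕ) : Fin 2 × Fin (2 ^ n) ≃ Fin (2 ^ (n + 1)) :=
  finProdFinEquiv.trans (finCongr (by ring))

def block {α : Type*} {n : ℕ} (a : Fin 2) (v : Fin (2 ^ (n + 1)) → α) : Fin (2 ^ n) → α :=
  fun t => v (blockEquiv n (a, t))

theorem blockEquiv_val (n : ℕ) (a : Fin 2) (b : Fin (2 ^ n)) :
    (blockEquiv n (a, b) : ℕ) = b + 2 ^ n * a := rfl

theorem blockEquiv_lt_of_lt {n : ℕ} (a : Fin 2) {k b : Fin (2 ^ n)} (h : k < b) :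
    blockEquiv n (a, k) < blockEquiv n (a, b) := by
  rw [Fin.lt_def, blockEquiv_val, blockEquiv_val]; omega

theorem blockEquiv_zero_lt_one {n : ℕ} (t b : Fin (2 ^ n)) :
    blockEquiv n (0, t) < blockEquiv n (1, b) := by
  rw [Fin.lt_def, blockEquiv_val, blockEquiv_val]; simp; omega

theorem hammingNorm_eq_add_block {α : Type*} [Zero α] [DecidableEq α] {n : ℕ}
    (v : Fin (2 ^ (n + 1)) → α) :
    hammingNorm v = hammingNorm (block 0 v) + hammingNorm (block 1 v) :=
  hammingNorm_eq_add_of_equiv (blockEquiv n) v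

theorem succ_apply (n : ℕ) (a c : Fin 2) (b d : Fin (2 ^ n)) :
    polarP (n + 1) (blockEquiv n (a, b)) (blockEquiv n (c, d)) = Pmat a c * polarP n b d := by
  simp [polarP, blockEquiv, Matrix.reindex_apply, Matrix.kroneckerMap]

theorem block_succ_row (n : ℕ) (a c : Fin 2) (b : Fin (2 ^ n)) :
    block c (polarP (n + 1) (blockEquiv n (a, b))) = Pmat a c • polarP n b := by
  ext d; simp [block, succ_apply]

theorem block_zero_vecMul_succ {n : ℕ} (u : Fin (2 ^ (n + 1)) → ZMod 2) :
    block 0 (u ᵥ* polarP (n + 1)) = (block 0 u + block 1 u) ᵥ* polarP n := by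
  ext d
  simp [block, vecMul, dotProduct, ← (blockEquiv n).sum_comp, Fintype.sum_prod_type, succ_apply, Pmat,
    add_mul, Finset.sum_add_distrib]

theorem block_one_vecMul_succ {n : ℕ} (u : Fin (2 ^ (n + 1)) → ZMod 2) :
    block 1 (u ᵥ* polarP (n + 1)) = block 1 u ᵥ* polarP n := by
  ext d
  simp [block, vecMul, dotProduct, ← (blockEquiv n).sum_comp, Fintype.sum_prod_type, succ_apply, Pmat]

theorem hammingNorm_row_succ_zero (n : ℕ) (b : Fin (2 ^ n)) :
    hammingNorm (polarP (n + 1) (blockEquiv n (0, b))) = hammingNorm (polarP n b) := by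
  simp [hammingNorm_eq_add_block (polarP (n + 1) _), block_succ_row, Pmat]

theorem hammingNorm_row_succ_one (n : ℕ) (b : Fin (2 ^ n)) :
    hammingNorm (polarP (n + 1) (blockEquiv n (1, b))) = 2 * hammingNorm (polarP n b) := by
  simp [hammingNorm_eq_add_block (polarP (n + 1) _), block_succ_row, Pmat, two_mul]

theorem hammingNorm_row_le_hammingNorm_vecMul :
    ∀ {n : ℕ} {u : Fin (2 ^ n) → ZMod 2} {i : Fin (2 ^ n)}, u i ≠ 0 → (∀ k < i, u k = 0) →
      hammingNorm (polarP n i) ≤ hammingNorm (u ᵥ* polarP n)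
  | 0, u, i, hui, _ => by
    have hu : u ≠ 0 := fun h => hui (congrFun h i)
    calc hammingNorm (polarP 0 i) ≤ Fintype.card (Fin (2 ^ 0)) := hammingNorm_le_card_fintype
      _ = 1 := rfl
      _ ≤ hammingNorm (u ᵥ* polarP 0) := by
        rw [polarP, vecMul_one]; exact hammingNorm_pos_iff.mpr hu
  | n + 1, u, i, hui, hlt => by
    obtain ⟨⟨a, b⟩, rfl⟩ := (blockEquiv n).surjective i
    rw [hammingNorm_eq_add_block (u ᵥ* _), block_zero_vecMul_succ, block_one_vecMul_succ]
    obtain rfl | rfl : a = 0 ∨ a = 1 := by omega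
    · have hlt₀ : ∀ k < b, block 0 u k = 0 := fun k hk => hlt _ (blockEquiv_lt_of_lt 0 hk)
      calc hammingNorm (polarP (n + 1) (blockEquiv n (0, b)))
          = hammingNorm (polarP n b) := hammingNorm_row_succ_zero n b
        _ ≤ hammingNorm (block 0 u ᵥ* polarP n) := hammingNorm_row_le_hammingNorm_vecMul hui hlt₀
        _ = hammingNorm ((block 0 u + block 1 u) ᵥ* polarP n - block 1 u ᵥ* polarP n) := by
          rw [add_vecMul, add_sub_cancel_right]
        _ ≤ _ := hammingNorm_sub_le _ _
    · have hblock₀ : block 0 u = 0 := funext fun t => hlt _ (blockEquiv_zero_lt_one t b)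
      have hlt₁ : ∀ k < b, block 1 u k = 0 := fun k hk => hlt _ (blockEquiv_lt_of_lt 1 hk)
      have ih := hammingNorm_row_le_hammingNorm_vecMul (u := block 1 u) hui hlt₁
      rw [hammingNorm_row_succ_one, hblock₀, zero_add]
      omega

theorem hammingNorm_row_le_hammingNorm_row_add_sum {n : ℕ} {i : Fin (2 ^ n)}
    {K : Finset (Fin (2 ^ n))} (hK : ∀ k ∈ K, i < k) :
    hammingNorm (polarP n i) ≤ hammingNorm (polarP n i + ∑ k ∈ K, polarP n k) := by
  set u : Fin (2 ^ n) → ZMod 2 := Pi.single i 1 + ∑ k ∈ K, Pi.single k 1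
  have hK_apply : ∀ j ≤ i, (∑ k ∈ K, Pi.single k 1 : Fin (2 ^ n) → ZMod 2) j = 0 := by
    intro j hj
    rw [Finset.sum_apply]
    exact Finset.sum_eq_zero fun k hk => Pi.single_eq_of_ne (hj.trans_lt (hK k hk)).ne 1
  have hu : u ᵥ* polarP n = polarP n i + ∑ k ∈ K, polarP n k := by
    simp only [u, add_vecMul, sum_vecMul, single_one_vecMul, row_def]
  rw [← hu]
  refine hammingNorm_row_le_hammingNorm_vecMul ?_ fun k hk => ?_
  · simp [u, hK_apply i le_rfl]
  · simp [u, hK_apply k hk.le, Pi.single_eq_of_ne hk.ne]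

end polarP

theorem coset_weight_gt_wmin_general (n : ℕ) (i : Fin (2 ^ n)) (wmin : ℕ)
    (hgt : wmin < hammingNorm (polarP n i))
    (K : Finset (Fin (2 ^ n))) (hK : ∀ k ∈ K, i < k) :
    wmin < hammingNorm (polarP n i + ∑ k ∈ K, polarP n k) :=
  hgt.trans_le (polarP.hammingNorm_row_le_hammingNorm_row_add_sum hK)

/-- (Corollary 1) If `i ∈ 𝒜` has row weight strictly greater than `w_min`, then
including any rows with indices `k > i` still gives weight strictly greater than
`w_min`. -/
theorem coset_weight_gt_wmin (n : ℕ) (A : Finset (Fin (2 ^ n))) (i : Fin (2 ^ n))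
    (hi : i ∈ A) (wmin : ℕ)
    (hwmin : wmin = (A.image fun j => hammingNorm (polarP n j)).min'
      (Finset.Nonempty.image ⟨i, hi⟩ _))
    (hgt : wmin < hammingNorm (polarP n i))
    (K : Finset (Fin (2 ^ n))) (hK : ∀ k ∈ K, i < k) :
    wmin < hammingNorm (polarP n i + ∑ k ∈ K, polarP n k) :=
  coset_weight_gt_wmin_general n i wmin hgt K hK
end

section
/- For any nonzero v ∈ 𝔽₂^N, the minimum Hamming weight of a nonzero codeword of a polar code with information set 𝒜 (i.e., of vectors v·P_n with supp(v) ⊆ 𝒜, v ≠ 0) is at least min_{i∈𝒜} 2^{w(i)}. -/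
/-!
Split `v` into halves `v₀, v₁` according to the top bit of the index. The recursive structure
`P_{n+1} = P ⊗ P_n` turns `v · P_{n+1}` into the Plotkin concatenation
`((v₀ + v₁) · P_n | v₁ · P_n)`, while the top bit adds one to `w(i)`, i.e. doubles `2^{w(i)}`.
By induction, some `i` in the support of `v` satisfies `2^{w(i)} ≤ wt(v · P_n)`: either a
witness for one half already bounds the weight of that half, or `v₀ + v₁` and `v₁` are both
nonzero and the two halves together have weight at least twice the smaller of their bounds.
-/

open Matrix

theorem Nat.digits_sum_add_base_pow_mul {b k m n : ℕ} (hb : 1 < b) (hn : n < b ^ k) :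
    (Nat.digits b (n + b ^ k * m)).sum = (Nat.digits b n).sum + (Nat.digits b m).sum := by
  rcases m.eq_zero_or_pos with rfl | hm
  · simp
  have hlen : (Nat.digits b n).length ≤ k := (Nat.digits_length_le_iff hb n).mpr hn
  rw [← Nat.add_sub_cancel' hlen, ← Nat.digits_append_zeroes_append_digits hb hm]
  simp

section Hamming

variable {ι ι' α β : Type*} [Fintype ι] [Fintype ι'] [Fintype α] [DecidableEq β] [Zero β]

theorem hammingNorm_comp_equiv_s11 (e : ι' ≃ ι) (c : ι → β) :
    hammingNorm (c ∘ e) = hammingNorm c := by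
  simp only [hammingNorm, Finset.card_filter]
  exact e.sum_comp fun i => if c i ≠ 0 then 1 else 0

theorem hammingNorm_prod (c : α × ι → β) : hammingNorm c = ∑ a, hammingNorm fun i => c (a, i) := by
  simp only [hammingNorm, Finset.card_filter]
  exact Fintype.sum_prod_type _

end Hamming

theorem exists_witness_of_plotkin_halves {ι M : Type*} [AddGroup M] (f : ι → ℕ) {v₀ v₁ : ι → M}
    {W₀ W₁ : ℕ} (hv : v₀ ≠ 0 ∨ v₁ ≠ 0)
    (h₀ : v₀ + v₁ ≠ 0 → ∃ i, (v₀ + v₁) i ≠ 0 ∧ f i ≤ W₀)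
    (h₁ : v₁ ≠ 0 → ∃ i, v₁ i ≠ 0 ∧ f i ≤ W₁) :
    (∃ i, v₀ i ≠ 0 ∧ f i ≤ W₀ + W₁) ∨ ∃ i, v₁ i ≠ 0 ∧ 2 * f i ≤ W₀ + W₁ := by
  by_cases hv₁ : v₁ = 0
  · subst hv₁
    obtain ⟨i, hi, hle⟩ := h₀ (by simpa using hv)
    exact .inl ⟨i, by simpa using hi, le_add_right hle⟩
  obtain ⟨i, hi, hle⟩ := h₁ hv₁
  by_cases hu : v₀ + v₁ = 0
  · have hv₀i : v₀ i = -v₁ i := eq_neg_of_add_eq_zero_left (congrFun hu i)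
    exact .inl ⟨i, hv₀i ▸ neg_ne_zero.mpr hi, le_add_left hle⟩
  obtain ⟨i', hi', hle'⟩ := h₀ hu
  by_cases hv₀i' : v₀ i' = 0
  · have hv₁i' : v₁ i' ≠ 0 := by simpa [hv₀i'] using hi'
    rcases le_total (f i) (f i') with h | h
    · exact .inr ⟨i, hi, by omega⟩
    · exact .inr ⟨i', hv₁i', by omega⟩
  · exact .inl ⟨i', hv₀i', le_add_right hle'⟩

def polarIndex (n : ℕ) : Fin 2 × Fin (2 ^ n) ≃ Fin (2 ^ (n + 1)) :=
  finProdFinEquiv.trans (finCongr (by ring))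

section PolarIndex

variable {n : ℕ}

theorem polarIndex_val (a : Fin 2) (i : Fin (2 ^ n)) :
    (polarIndex n (a, i) : ℕ) = i + 2 ^ n * a := by
  simp [polarIndex, finProdFinEquiv]

theorem digits_sum_polarIndex (a : Fin 2) (i : Fin (2 ^ n)) :
    (Nat.digits 2 (polarIndex n (a, i))).sum = (Nat.digits 2 i).sum + a := by
  rw [polarIndex_val, Nat.digits_sum_add_base_pow_mul one_lt_two i.isLt]
  fin_cases a <;> simp

theorem polarP_polarIndex (a b : Fin 2) (i j : Fin (2 ^ n)) :
    polarP (n + 1) (polarIndex n (a, i)) (polarIndex n (b, j)) = Pmat a b * polarP n i j := by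
  simp only [polarP, polarIndex, reindex_apply, submatrix_apply, Equiv.symm_apply_apply]
  rfl

theorem vecMul_polarP_succ_polarIndex (v : Fin (2 ^ (n + 1)) → ZMod 2) (b : Fin 2)
    (j : Fin (2 ^ n)) :
    (v ᵥ* polarP (n + 1)) (polarIndex n (b, j)) =
      ((∑ a, Pmat a b • fun i => v (polarIndex n (a, i))) ᵥ* polarP n) j := by
  simp only [vecMul, dotProduct, ← (polarIndex n).sum_comp, Fintype.sum_prod_type,
    polarP_polarIndex, Finset.sum_apply, Pi.smul_apply, smul_eq_mul, Finset.sum_mul]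
  rw [Finset.sum_comm]
  simp only [mul_assoc, mul_left_comm]

theorem hammingNorm_vecMul_polarP_succ (v : Fin (2 ^ (n + 1)) → ZMod 2) :
    hammingNorm (v ᵥ* polarP (n + 1)) =
      hammingNorm (((fun i => v (polarIndex n (0, i))) + fun i => v (polarIndex n (1, i)))
          ᵥ* polarP n) +
        hammingNorm ((fun i => v (polarIndex n (1, i))) ᵥ* polarP n) := by
  rw [← hammingNorm_comp_equiv_s11 (polarIndex n), hammingNorm_prod, Fin.sum_univ_two]
  simp only [Function.comp_apply, vecMul_polarP_succ_polarIndex, Fin.sum_univ_two, Pmat]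
  simp

end PolarIndex

theorem exists_ne_zero_two_pow_digits_sum_le_hammingNorm (n : ℕ) (v : Fin (2 ^ n) → ZMod 2)
    (hv : v ≠ 0) :
    ∃ i, v i ≠ 0 ∧ 2 ^ (Nat.digits 2 i).sum ≤ hammingNorm (v ᵥ* polarP n) := by
  induction n with
  | zero =>
    obtain ⟨i, hi⟩ := Function.ne_iff.mp hv
    have hi0 : (i : ℕ) = 0 := Nat.lt_one_iff.mp i.isLt
    refine ⟨i, hi, ?_⟩
    simpa [hi0, polarP, Nat.one_le_iff_ne_zero] using hv
  | succ n ih =>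
    have hhalves : (fun i => v (polarIndex n (0, i))) ≠ 0 ∨
        (fun i => v (polarIndex n (1, i))) ≠ 0 := by
      obtain ⟨k, hk⟩ := Function.ne_iff.mp hv
      obtain ⟨⟨a, i⟩, rfl⟩ := (polarIndex n).surjective k
      fin_cases a
      exacts [.inl (Function.ne_iff.mpr ⟨i, hk⟩), .inr (Function.ne_iff.mpr ⟨i, hk⟩)]
    rcases exists_witness_of_plotkin_halves (fun i : Fin (2 ^ n) => 2 ^ (Nat.digits 2 i).sum)
        hhalves (ih _) (ih _) with ⟨i, hi, hle⟩ | ⟨i, hi, hle⟩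
    · refine ⟨polarIndex n (0, i), hi, ?_⟩
      simpa [digits_sum_polarIndex, hammingNorm_vecMul_polarP_succ] using hle
    · refine ⟨polarIndex n (1, i), hi, ?_⟩
      rw [digits_sum_polarIndex, hammingNorm_vecMul_polarP_succ]
      simpa [pow_succ, mul_comm] using hle

/-- The minimum weight of a nonzero codeword of the polar code with information
set `𝒜` is at least `min_{i∈𝒜} 2^{w(i)}`. -/
theorem polar_min_distance_lower_bound (n : ℕ) (A : Finset (Fin (2 ^ n)))
    (hA : A.Nonempty) (v : Fin (2 ^ n) → ZMod 2) (hv : v ≠ 0)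
    (hsupp : ∀ i : Fin (2 ^ n), v i ≠ 0 → i ∈ A) :
    (A.image fun i => 2 ^ ((Nat.digits 2 i.val).sum)).min' (hA.image _) ≤
      hammingNorm (v ᵥ* polarP n) := by
  obtain ⟨i, hi, hle⟩ := exists_ne_zero_two_pow_digits_sum_le_hammingNorm n v hv
  exact (Finset.min'_le _ _ (Finset.mem_image_of_mem _ (hsupp i hi))).trans hle
end

section
/- Suppose the index set 𝒜 ⊆ {0,…,N−1} and the minimum-weight index set ℳ = { i ∈ 𝒜 : w(g_i) = w_min } satisfy: for every i ∈ ℳ there is no j ∈ 𝒜ᶜ with j > i (i.e., every index above min(ℳ) is in 𝒜). Then the polar code { v·P_n : supp(v) ⊆ 𝒜 } and the PAC code { v·G·P_n : supp(v) ⊆ 𝒜 } have the same number of minimum-weight codewords. -/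
open Matrix

/-- The N×N upper-triangular Toeplitz convolutional precoding matrix:
`G i j = g (j - i)` when `0 ≤ j - i ≤ m`, else `0`. -/
def toeplitzG (N m : ℕ) (g : ℕ → ZMod 2) : Matrix (Fin N) (Fin N) (ZMod 2) :=
  Matrix.of fun i j => if i.val ≤ j.val ∧ j.val - i.val ≤ m then g (j.val - i.val) else 0

/-!
A nonzero message `v` has a leading index: the least `i` with `v i ≠ 0`. The weight of `v ⬝ P_n`
is at least the weight of the row `g_i` at its leading index, by induction on `n` through the
Plotkin decomposition `(u + v | v)` of `P_{n+1}`. An upper unitriangular precoder is invertible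
and preserves leading indices. So a minimum-weight codeword of either code comes from messages
whose common leading index `i` lies in `ℳ`; their supports lie in `[i, N) ⊆ 𝒜`, and both sets of
minimum-weight codewords coincide.
-/

open Function

section LeadingIndex

variable {ι R : Type*} [LinearOrder ι]

theorem exists_isLeast_support [Finite ι] [Zero R] {v : ι → R} (hv : v ≠ 0) :
    ∃ i, IsLeast (support v) i := by
  obtain ⟨i, hi⟩ := (Set.toFinite (support v)).exists_minimal (support_nonempty_iff.mpr hv)
  exact ⟨i, minimal_iff_isLeast.mp hi⟩

theorem eq_zero_of_lt_of_isLeast_support [Zero R] {v : ι → R} {i j : ι}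
    (hv : IsLeast (support v) i) (hj : j < i) : v j = 0 :=
  notMem_support.mp fun hj' => (hv.2 hj').not_gt hj

variable [Fintype ι] [NonAssocSemiring R]

theorem vecMul_apply_of_isUpperTriangular {M : Matrix ι ι R} (hM : M.IsUpperTriangular)
    (hdiag : ∀ i, M i i = 1) {v : ι → R} {i j : ι} (hv : ∀ k < i, v k = 0) (hj : j ≤ i) :
    (v ᵥ* M) j = v j := by
  rw [vecMul, dotProduct, Finset.sum_eq_single j, hdiag, mul_one]
  · intro k _ hkj
    rcases lt_or_ge k i with hki | hik
    · rw [hv k hki, zero_mul]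
    · rw [hM (lt_of_le_of_ne (hj.trans hik) (Ne.symm hkj)), mul_zero]
  · exact fun h => absurd (Finset.mem_univ j) h

theorem IsLeast.support_vecMul {M : Matrix ι ι R} (hM : M.IsUpperTriangular)
    (hdiag : ∀ i, M i i = 1) {v : ι → R} {i : ι} (hv : IsLeast (support v) i) :
    IsLeast (support (v ᵥ* M)) i := by
  have hlow := fun k => eq_zero_of_lt_of_isLeast_support (j := k) hv
  refine ⟨?_, fun j hj => le_of_not_gt fun hji => hj ?_⟩
  · rw [mem_support, vecMul_apply_of_isUpperTriangular hM hdiag hlow le_rfl]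
    exact hv.1
  · rw [vecMul_apply_of_isUpperTriangular hM hdiag hlow hji.le]
    exact hlow j hji

end LeadingIndex

theorem Matrix.vecMul_surjective_of_isUpperTriangular {ι R : Type*} [Fintype ι] [DecidableEq ι]
    [LinearOrder ι] [CommRing R] {M : Matrix ι ι R} (hM : M.IsUpperTriangular)
    (hdiag : ∀ i, M i i = 1) : Surjective M.vecMul := by
  rw [vecMul_surjective_iff_isUnit, isUnit_iff_isUnit_det, det_of_isUpperTriangular hM]
  simp [hdiag]

theorem hammingNorm_le_add_hammingNorm_add {ι R : Type*} [Fintype ι] [AddCommGroup R] [DecidableEq R]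
    (x y : ι → R) : hammingNorm x ≤ hammingNorm (x + y) + hammingNorm y := by
  have h := hammingDist_triangle y 0 (x + y)
  rwa [hammingDist_eq_hammingNorm, show -y + (x + y) = x by abel, hammingDist_zero_right,
    hammingDist_zero_left, add_comm] at h

section PolarRecursion

variable {n : ℕ}

def polarEquiv (n : ℕ) : Fin 2 × Fin (2 ^ n) ≃ Fin (2 ^ (n + 1)) :=
  finProdFinEquiv.trans (finCongr (by ring))

def polarHalf {R : Type*} (a : Fin 2) (x : Fin (2 ^ (n + 1)) → R) : Fin (2 ^ n) → R :=
  fun j => x (polarEquiv n (a, j))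

theorem polarEquiv_val (a : Fin 2) (b : Fin (2 ^ n)) :
    (polarEquiv n (a, b) : ℕ) = b + 2 ^ n * a := by
  simp [polarEquiv, finProdFinEquiv]

theorem polarEquiv_le_polarEquiv_iff {a : Fin 2} {b b' : Fin (2 ^ n)} :
    polarEquiv n (a, b) ≤ polarEquiv n (a, b') ↔ b ≤ b' := by
  rw [Fin.le_def, Fin.le_def, polarEquiv_val, polarEquiv_val]
  omega

theorem polarEquiv_zero_lt_one (b b' : Fin (2 ^ n)) :
    polarEquiv n (0, b) < polarEquiv n (1, b') := by
  rw [Fin.lt_def, polarEquiv_val, polarEquiv_val]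
  have := b.isLt
  simp only [Fin.isValue, Fin.val_zero, mul_zero, add_zero, Fin.val_one, mul_one]
  omega

theorem polarP_succ_polarEquiv (p q : Fin 2 × Fin (2 ^ n)) :
    polarP (n + 1) (polarEquiv n p) (polarEquiv n q) = Pmat p.1 q.1 * polarP n p.2 q.2 := by
  simp [polarP, polarEquiv, reindex_apply]

theorem hammingNorm_eq_add_polarHalf {R : Type*} [Zero R] [DecidableEq R]
    (x : Fin (2 ^ (n + 1)) → R) :
    hammingNorm x = hammingNorm (polarHalf 0 x) + hammingNorm (polarHalf 1 x) := by
  simp only [hammingNorm, Finset.card_filter]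
  rw [← (polarEquiv n).sum_comp, Fintype.sum_prod_type, Fin.sum_univ_two]
  rfl

theorem polarHalf_polarP_succ (a a' : Fin 2) (b : Fin (2 ^ n)) :
    polarHalf a' (polarP (n + 1) (polarEquiv n (a, b))) = Pmat a a' • polarP n b := by
  ext j
  exact polarP_succ_polarEquiv (a, b) (a', j)

theorem hammingNorm_polarP_succ (a : Fin 2) (b : Fin (2 ^ n)) :
    hammingNorm (polarP (n + 1) (polarEquiv n (a, b))) = (a + 1) * hammingNorm (polarP n b) := by
  rw [hammingNorm_eq_add_polarHalf, polarHalf_polarP_succ, polarHalf_polarP_succ]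
  fin_cases a <;> simp [Pmat, two_mul]

theorem vecMul_polarP_succ_apply (v : Fin (2 ^ (n + 1)) → ZMod 2) (q : Fin 2 × Fin (2 ^ n)) :
    (v ᵥ* polarP (n + 1)) (polarEquiv n q) =
      ∑ a, Pmat a q.1 * (polarHalf a v ᵥ* polarP n) q.2 := by
  simp only [vecMul, dotProduct, polarHalf, Finset.mul_sum]
  rw [← Fintype.sum_equiv (polarEquiv n) (fun p => v (polarEquiv n p) *
    polarP (n + 1) (polarEquiv n p) (polarEquiv n q)) _ fun _ => rfl, Fintype.sum_prod_type]
  simp only [polarP_succ_polarEquiv]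
  congr! 2 with a _ b _
  ring

theorem polarHalf_zero_vecMul_polarP_succ (v : Fin (2 ^ (n + 1)) → ZMod 2) :
    polarHalf 0 (v ᵥ* polarP (n + 1)) = (polarHalf 0 v + polarHalf 1 v) ᵥ* polarP n := by
  ext j
  simp [polarHalf, vecMul_polarP_succ_apply, Pmat, add_vecMul]

theorem polarHalf_one_vecMul_polarP_succ (v : Fin (2 ^ (n + 1)) → ZMod 2) :
    polarHalf 1 (v ᵥ* polarP (n + 1)) = polarHalf 1 v ᵥ* polarP n := by
  ext j
  simp [polarHalf, vecMul_polarP_succ_apply, Pmat]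

theorem IsLeast.support_polarHalf {R : Type*} [Zero R] {v : Fin (2 ^ (n + 1)) → R}
    {a : Fin 2} {b : Fin (2 ^ n)} (hv : IsLeast (support v) (polarEquiv n (a, b))) :
    IsLeast (support (polarHalf a v)) b :=
  ⟨hv.1, fun _ hj => polarEquiv_le_polarEquiv_iff.mp (hv.2 hj)⟩

theorem polarHalf_zero_eq_zero {R : Type*} [Zero R] {v : Fin (2 ^ (n + 1)) → R}
    {b : Fin (2 ^ n)} (hv : IsLeast (support v) (polarEquiv n (1, b))) : polarHalf 0 v = 0 :=
  funext fun j => (eq_zero_of_lt_of_isLeast_support hv (polarEquiv_zero_lt_one j b) :)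

end PolarRecursion

theorem hammingNorm_polarP_le {n : ℕ} {v : Fin (2 ^ n) → ZMod 2} {i : Fin (2 ^ n)}
    (hv : IsLeast (support v) i) : hammingNorm (polarP n i) ≤ hammingNorm (v ᵥ* polarP n) := by
  induction n with
  | zero =>
    rw [polarP, vecMul_one]
    calc hammingNorm ((1 : Matrix (Fin (2 ^ 0)) (Fin (2 ^ 0)) (ZMod 2)) i)
        ≤ Fintype.card (Fin (2 ^ 0)) := hammingNorm_le_card_fintype
      _ = 1 := rfl
      _ ≤ hammingNorm v := hammingNorm_pos_iff.mpr fun h => hv.1 (congrFun h i)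
  | succ n ih =>
    obtain ⟨⟨a, b⟩, rfl⟩ := (polarEquiv n).surjective i
    rw [hammingNorm_polarP_succ, hammingNorm_eq_add_polarHalf (v ᵥ* _),
      polarHalf_zero_vecMul_polarP_succ, polarHalf_one_vecMul_polarP_succ]
    -- Leading index in the lower half: `w(u) ≤ w(u + v) + w(v)`. In the upper half the lower
    -- half of `v` vanishes, and both the row weight and the codeword weight double.
    obtain rfl | rfl : a = 0 ∨ a = 1 := by omega
    · calc (0 + 1) * hammingNorm (polarP n b)
          ≤ hammingNorm (polarHalf 0 v ᵥ* polarP n) := by simpa using ih hv.support_polarHalf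
        _ ≤ _ := by
          rw [add_vecMul]
          exact hammingNorm_le_add_hammingNorm_add _ _
    · rw [polarHalf_zero_eq_zero hv, zero_add]
      have := ih hv.support_polarHalf
      rw [Fin.val_one]
      omega

theorem toeplitzG_isUpperTriangular (N m : ℕ) (g : ℕ → ZMod 2) :
    (toeplitzG N m g).IsUpperTriangular := fun _ _ hji =>
  if_neg fun h => (Fin.lt_def.mp hji).not_ge h.1

theorem toeplitzG_apply_self {N m : ℕ} {g : ℕ → ZMod 2} (hg : g 0 = 1) (i : Fin N) :
    toeplitzG N m g i i = 1 := by
  simp [toeplitzG, hg]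

section MinWeightCodewords

variable {n : ℕ} {A : Finset (Fin (2 ^ n))} {wmin : ℕ}

theorem support_subset_of_isLeast_of_minWeight
    (hwmin : ∀ i ∈ A, wmin ≤ hammingNorm (polarP n i))
    (hM : ∀ i ∈ A, hammingNorm (polarP n i) = wmin → ∀ j, i < j → j ∈ A)
    {u u' : Fin (2 ^ n) → ZMod 2} {i : Fin (2 ^ n)} (hu : IsLeast (support u) i) (hi : i ∈ A)
    (hw : hammingNorm (u ᵥ* polarP n) = wmin) (hu' : IsLeast (support u') i) :
    support u' ⊆ A := by
  have hrow : hammingNorm (polarP n i) = wmin :=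
    le_antisymm (hw ▸ hammingNorm_polarP_le hu) (hwmin i hi)
  intro j hj
  rcases (hu'.2 hj).eq_or_lt with rfl | hij
  · exact hi
  · exact hM i hi hrow j hij

variable {G : Matrix (Fin (2 ^ n)) (Fin (2 ^ n)) (ZMod 2)}

theorem exists_precoded_eq_of_minWeight
    (hwmin : ∀ i ∈ A, wmin ≤ hammingNorm (polarP n i))
    (hM : ∀ i ∈ A, hammingNorm (polarP n i) = wmin → ∀ j, i < j → j ∈ A)
    (hG : G.IsUpperTriangular) (hdiag : ∀ i, G i i = 1)
    {v : Fin (2 ^ n) → ZMod 2} (hv : support v ⊆ A) (hw : hammingNorm (v ᵥ* polarP n) = wmin) :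
    ∃ u, support u ⊆ A ∧ (u ᵥ* G) ᵥ* polarP n = v ᵥ* polarP n := by
  obtain ⟨u, rfl⟩ := vecMul_surjective_of_isUpperTriangular hG hdiag v
  refine ⟨u, ?_, rfl⟩
  rcases eq_or_ne u 0 with rfl | hu
  · simp
  obtain ⟨i, hi⟩ := exists_isLeast_support hu
  have hi' := hi.support_vecMul hG hdiag
  exact support_subset_of_isLeast_of_minWeight hwmin hM hi' (hv hi'.1) hw hi

theorem support_vecMul_subset_of_minWeight
    (hwmin : ∀ i ∈ A, wmin ≤ hammingNorm (polarP n i))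
    (hM : ∀ i ∈ A, hammingNorm (polarP n i) = wmin → ∀ j, i < j → j ∈ A)
    (hG : G.IsUpperTriangular) (hdiag : ∀ i, G i i = 1)
    {v : Fin (2 ^ n) → ZMod 2} (hv : support v ⊆ A)
    (hw : hammingNorm ((v ᵥ* G) ᵥ* polarP n) = wmin) : support (v ᵥ* G) ⊆ A := by
  rcases eq_or_ne v 0 with rfl | hv0
  · simp
  obtain ⟨i, hi⟩ := exists_isLeast_support hv0
  have hi' := hi.support_vecMul hG hdiag
  exact support_subset_of_isLeast_of_minWeight hwmin hM hi' (hv hi.1) hw hi'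

end MinWeightCodewords

/-- (Corollary 2) If for every minimum-weight information index `i ∈ ℳ` there is
no frozen index `j ∈ 𝒜ᶜ` with `j > i`, then the polar code and the PAC code have
the same number of minimum-weight codewords. -/
theorem pac_same_Admin (n m : ℕ) (g : ℕ → ZMod 2) (hg : g 0 = 1)
    (A : Finset (Fin (2 ^ n))) (hA : A.Nonempty) (wmin : ℕ)
    (hwmin : wmin = (A.image fun j => hammingNorm (polarP n j)).min' (hA.image _))
    (hM : ∀ i ∈ A, hammingNorm (polarP n i) = wmin →
      ∀ j : Fin (2 ^ n), i < j → j ∈ A) :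
    (((Finset.univ.filter fun v : Fin (2 ^ n) → ZMod 2 =>
        ∀ i : Fin (2 ^ n), v i ≠ 0 → i ∈ A).image fun v => v ᵥ* polarP n).filter
          fun c => hammingNorm c = wmin).card =
    (((Finset.univ.filter fun v : Fin (2 ^ n) → ZMod 2 =>
        ∀ i : Fin (2 ^ n), v i ≠ 0 → i ∈ A).image
          fun v => (v ᵥ* toeplitzG (2 ^ n) m g) ᵥ* polarP n).filter
            fun c => hammingNorm c = wmin).card := by
  have hwle : ∀ i ∈ A, wmin ≤ hammingNorm (polarP n i) := fun i hi =>
    hwmin ▸ Finset.min'_le _ _ (Finset.mem_image_of_mem _ hi)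
  have hG := toeplitzG_isUpperTriangular (2 ^ n) m g
  have hdiag := toeplitzG_apply_self (N := 2 ^ n) (m := m) hg
  congr 1
  ext c
  simp only [Finset.mem_filter, Finset.mem_image, Finset.mem_univ, true_and]
  constructor
  · rintro ⟨⟨v, hv, rfl⟩, hw⟩
    exact ⟨exists_precoded_eq_of_minWeight hwle hM hG hdiag hv hw, hw⟩
  · rintro ⟨⟨v, hv, rfl⟩, hw⟩
    exact ⟨⟨_, support_vecMul_subset_of_minWeight hwle hM hG hdiag hv hw, rfl⟩, hw⟩
end
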